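/- Let codebook vectors {c_k}_{k=1}^K ⊂ ℝ^d satisfy max_k ‖c_k‖ ≤ R, and for each (t, z) with t ∈ [0, 1) let p(·|z) and q_θ(·|z) be categorical distributions over {1,…,K}. Define velocity fields v*(z,t) = (Σ_k p(k|z) c_k − z)/(1−t) and v_θ(z,t) = (Σ_k q_θ(k|z) c_k − z)/(1−t). Then for every such (t, z), ‖v_θ(z,t) − v*(z,t)‖² ≤ (2R²/(1−t)²) · KL(p(·|z) ‖ q_θ(·|z)). -/

import Mathlib

/-!
Both velocity fields share the term `-z / (1 - t)`, so their difference is `(1 - t)⁻¹` times the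
difference of the two posterior means `∑ k, (q k - p k) • c k`, whose norm is at most
`R · ‖p - q‖₁`. Pinsker's inequality `‖p - q‖₁² ≤ 2 KL(p ‖ q)` finishes the proof. For Pinsker we
use Cauchy–Schwarz with the weights `m = (p + 2q) / 3`, which reduces it to the scalar inequality
`3 (r - 1)² ≤ 2 (r + 2) klFun r` at `r = p / q`.
-/

open Real Set Finset InformationTheory

theorem monotoneOn_add_one_mul_log_sub :
    MonotoneOn (fun r : ℝ => (r + 1) * log r - 2 * (r - 1)) (Ioi 0) := by
  have hderiv : ∀ x : ℝ, 0 < x →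
      HasDerivAt (fun r : ℝ => (r + 1) * log r - 2 * (r - 1)) (log x + x⁻¹ - 1) x := by
    intro x hx
    refine ((((hasDerivAt_id x).add_const 1).mul (hasDerivAt_log hx.ne')).sub
      (((hasDerivAt_id x).sub_const 1).const_mul 2)).congr_deriv ?_
    simp only [id]
    field_simp
    ring
  refine monotoneOn_of_deriv_nonneg (convex_Ioi 0)
    (fun x hx => (hderiv x hx).continuousAt.continuousWithinAt)
    (fun x hx => (hderiv x (interior_subset hx)).differentiableAt.differentiableWithinAt)
    (fun x hx => ?_)
  rw [interior_Ioi] at hx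
  rw [(hderiv x hx).deriv]
  linarith [one_sub_inv_le_log_of_pos hx]

theorem three_mul_sq_sub_one_le_klFun {r : ℝ} (hr : 0 ≤ r) :
    3 * (r - 1) ^ 2 ≤ 2 * (r + 2) * klFun r := by
  set g : ℝ → ℝ := fun x => 2 * (x + 2) * klFun x - 3 * (x - 1) ^ 2
  set h : ℝ → ℝ := fun x => (x + 1) * log x - 2 * (x - 1)
  have hderiv : ∀ x : ℝ, 0 < x → HasDerivAt g (4 * h x) x := by
    intro x hx
    refine ((((hasDerivAt_id x).add_const 2).const_mul 2).mul (hasDerivAt_klFun hx.ne') |>.sub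
      ((((hasDerivAt_id x).sub_const 1).pow 2).const_mul 3)).congr_deriv ?_
    simp only [h, klFun_apply, id]
    ring
  have hcont : Continuous g := by
    have := continuous_klFun
    fun_prop
  have hh1 : h 1 = 0 := by simp [h]
  have hmono := monotoneOn_add_one_mul_log_sub
  have one_mem : (1 : ℝ) ∈ Set.Ioi 0 := mem_Ioi.2 one_pos
  -- `g' = 4 h` and `h` changes sign from `-` to `+` at `1`, so `g` is minimal at `1`.
  suffices g 1 ≤ g r by simpa [g, klFun_one] using this
  rcases le_total r 1 with hr1 | hr1
  · refine antitoneOn_of_deriv_nonpos (convex_Icc 0 1) hcont.continuousOn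
      (fun x hx => ?_) (fun x hx => ?_) ⟨hr, hr1⟩ ⟨zero_le_one, le_rfl⟩ hr1
    all_goals rw [interior_Icc] at hx
    · exact (hderiv x hx.1).differentiableAt.differentiableWithinAt
    · rw [(hderiv x hx.1).deriv]
      have : h x ≤ h 1 := hmono hx.1 one_mem hx.2.le
      linarith
  · refine monotoneOn_of_deriv_nonneg (convex_Ici 1) hcont.continuousOn
      (fun x hx => ?_) (fun x hx => ?_) self_mem_Ici hr1 hr1
    all_goals rw [interior_Ici] at hx
    · exact (hderiv x (one_pos.trans hx)).differentiableAt.differentiableWithinAt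
    · rw [(hderiv x (one_pos.trans hx)).deriv]
      have : h 1 ≤ h x := hmono one_mem (mem_Ioi.2 (one_pos.trans hx)) hx.le
      linarith

theorem three_mul_sq_sub_le_mul_log_div {p q : ℝ} (hp : 0 ≤ p) (hq : 0 < q) :
    3 * (p - q) ^ 2 ≤ 2 * (p + 2 * q) * (p * log (p / q) - p + q) := by
  obtain ⟨r, rfl⟩ : ∃ r, p = r * q := ⟨p / q, (div_mul_cancel₀ p hq.ne').symm⟩
  have hr : 0 ≤ r := nonneg_of_mul_nonneg_left hp hq
  have hscaled := mul_le_mul_of_nonneg_left (three_mul_sq_sub_one_le_klFun hr) (sq_nonneg q)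
  rw [klFun_apply] at hscaled
  rw [mul_div_cancel_right₀ r hq.ne']
  linarith

theorem sq_sum_abs_sub_le_two_mul_sum_mul_log_div {ι : Type*} [Fintype ι] {p q : ι → ℝ}
    (hp : ∀ i, 0 ≤ p i) (hq : ∀ i, 0 ≤ q i) (hp1 : ∑ i, p i = 1) (hq1 : ∑ i, q i = 1)
    (hac : ∀ i, q i = 0 → p i = 0) :
    (∑ i, |p i - q i|) ^ 2 ≤ 2 * ∑ i, p i * log (p i / q i) := by
  set m : ι → ℝ := fun i => (p i + 2 * q i) / 3
  have hm0 : ∀ i, 0 ≤ m i := fun i => by have := hp i; have := hq i; positivity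
  have hm1 : ∑ i, m i = 1 := by
    simp only [m, ← Finset.sum_div, sum_add_distrib, ← mul_sum, hp1, hq1]
    norm_num
  have hcs : ∀ i, |p i - q i| ^ 2 ≤ (p i - q i) ^ 2 / m i * m i := by
    intro i
    rcases eq_or_ne (m i) 0 with h | h
    · have hqi : q i = 0 := by linarith [hp i, hq i, show (p i + 2 * q i) / 3 = 0 from h]
      simp [hqi, hac i hqi]
    · rw [div_mul_cancel₀ _ h, sq_abs]
  have hterm : ∀ i, (p i - q i) ^ 2 / m i ≤ 2 * (p i * log (p i / q i) - p i + q i) := by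
    intro i
    rcases (hq i).eq_or_lt with hqi | hqi
    · simp [← hqi, hac i hqi.symm]
    · rw [div_le_iff₀ (by have := hp i; positivity)]
      simp only [m]
      linarith [three_mul_sq_sub_le_mul_log_div (hp i) hqi]
  calc (∑ i, |p i - q i|) ^ 2 ≤ (∑ i, (p i - q i) ^ 2 / m i) * ∑ i, m i :=
        sum_sq_le_sum_mul_sum_of_sq_le_mul univ
          (fun i _ => div_nonneg (sq_nonneg _) (hm0 i)) (fun i _ => hm0 i) (fun i _ => hcs i)
    _ ≤ ∑ i, 2 * (p i * log (p i / q i) - p i + q i) := by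
        rw [hm1, mul_one]
        exact sum_le_sum fun i _ => hterm i
    _ = 2 * ∑ i, p i * log (p i / q i) := by
        rw [← mul_sum, sum_add_distrib, sum_sub_distrib, hp1, hq1, sub_add_cancel]

theorem norm_sum_smul_sub_sum_smul_le {ι E : Type*} [Fintype ι] [SeminormedAddCommGroup E]
    [NormedSpace ℝ E] {c : ι → E} {R : ℝ} (hc : ∀ i, ‖c i‖ ≤ R) (w w' : ι → ℝ) :
    ‖∑ i, w i • c i - ∑ i, w' i • c i‖ ≤ R * ∑ i, |w i - w' i| := by
  rw [← sum_sub_distrib, mul_sum]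
  refine (norm_sum_le _ _).trans (sum_le_sum fun i _ => ?_)
  rw [← sub_smul, norm_smul, Real.norm_eq_abs, mul_comm]
  exact mul_le_mul_of_nonneg_right (hc i) (abs_nonneg _)

/-- Pointwise core of the consistency proposition: for codebook vectors bounded by `R`,
categorical posteriors `p(·|z)`, `q_θ(·|z)` and velocity fields
`v*(z,t) = (Σ_k p(k|z) c_k − z)/(1−t)`, `v_θ(z,t) = (Σ_k q_θ(k|z) c_k − z)/(1−t)`,
for every `t ∈ [0,1)` and `z`:
`‖v_θ(z,t) − v*(z,t)‖² ≤ (2R²/(1−t)²) · KL(p(·|z) ‖ q_θ(·|z))`. -/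
theorem velocity_field_kl_bound
    (d K : ℕ) (c : Fin K → EuclideanSpace ℝ (Fin d)) (R : ℝ)
    (hR : ∀ k, ‖c k‖ ≤ R)
    (Z : Type*) (p qθ : Z → Fin K → ℝ)
    (hp : ∀ z k, 0 ≤ p z k) (hq : ∀ z k, 0 ≤ qθ z k)
    (hp1 : ∀ z, ∑ k, p z k = 1) (hq1 : ∀ z, ∑ k, qθ z k = 1)
    (hac : ∀ z k, qθ z k = 0 → p z k = 0)
    (zf : Z → EuclideanSpace ℝ (Fin d)) :
    ∀ (t : ℝ), 0 ≤ t → t < 1 → ∀ z : Z,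
      ‖(1 - t)⁻¹ • ((∑ k, qθ z k • c k) - zf z)
          - (1 - t)⁻¹ • ((∑ k, p z k • c k) - zf z)‖ ^ 2
        ≤ 2 * R ^ 2 / (1 - t) ^ 2 * ∑ k, p z k * Real.log (p z k / qθ z k) := by
  intro t _ _ z
  have hmean := norm_sum_smul_sub_sum_smul_le hR (qθ z) (p z)
  have hpinsker := sq_sum_abs_sub_le_two_mul_sum_mul_log_div (hp z) (hq z) (hp1 z) (hq1 z) (hac z)
  simp only [abs_sub_comm (qθ z _)] at hmean
  rw [← smul_sub, sub_sub_sub_cancel_right, norm_smul, mul_pow, Real.norm_eq_abs, sq_abs]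
  calc (1 - t)⁻¹ ^ 2 * ‖∑ k, qθ z k • c k - ∑ k, p z k • c k‖ ^ 2
      ≤ (1 - t)⁻¹ ^ 2 * (R * ∑ k, |p z k - qθ z k|) ^ 2 := by gcongr
    _ ≤ (1 - t)⁻¹ ^ 2 * (R ^ 2 * (2 * ∑ k, p z k * log (p z k / qθ z k))) := by
        rw [mul_pow]
        gcongr
    _ = 2 * R ^ 2 / (1 - t) ^ 2 * ∑ k, p z k * log (p z k / qθ z k) := by
        rw [inv_pow]
        ring
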